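/- Almost sure convergence of distorted empirical means: let f : [0,1] → [0,1] be convex with f(0)=0, f(1)=1, continuous at 1, with f' ∈ L^Φ(0,1) for a Young function Φ with conjugate Ψ. Let ξ ∈ L^Ψ with law μ and quantile function q, and let (ξ_n) be iid with law μ. Denote by ξ_{[n:1]} ≤ ⋯ ≤ ξ_{[n:n]} the order statistics of ξ_1,…,ξ_n. Then almost surely ξ_{[n:1]} f(1/n) + Σ_{k=1}^{n−1} ξ_{[n:k+1]} ( f((k+1)/n) − f(k/n) ) → ∫_0^1 q(u) f'(u) du. -/

import Mathlib

open MeasureTheory Filter Set Topology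

noncomputable section

/-- A Young function: even, convex, vanishing exactly at 0, nondecreasing on ℝ₊,
tending to ∞ at ∞. -/
def IsYoung (Φ : ℝ → ℝ) : Prop :=
  (∀ x, Φ (-x) = Φ x) ∧ ConvexOn ℝ Set.univ Φ ∧ Φ 0 = 0 ∧
  (∀ x, x ≠ 0 → 0 < Φ x) ∧ MonotoneOn Φ (Set.Ici 0) ∧
  Filter.Tendsto Φ Filter.atTop Filter.atTop

/-- A conjugate pair of Young functions, characterised by Young's inequality
`a*b ≤ Φ a + Ψ b`. -/
def IsConjugatePair (Φ Ψ : ℝ → ℝ) : Prop :=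
  IsYoung Φ ∧ IsYoung Ψ ∧
  (∀ a b : ℝ, 0 ≤ a → 0 ≤ b → a * b ≤ Φ a + Ψ b)

/-- Membership in the Orlicz space `L^Φ`: `E[Φ(kξ)] < ∞` for some `k > 0`. -/
def MemLOrlicz {Ω : Type*} [MeasurableSpace Ω] (Φ : ℝ → ℝ) (P : Measure Ω) (ξ : Ω → ℝ) : Prop :=
  Measurable ξ ∧ ∃ k : ℝ, 0 < k ∧ Integrable (fun ω => Φ (k * ξ ω)) P

/-- Membership in the Orlicz heart `M^Φ`: `E[Φ(kξ)] < ∞` for every `k > 0`. -/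
def MemMOrlicz {Ω : Type*} [MeasurableSpace Ω] (Φ : ℝ → ℝ) (P : Measure Ω) (ξ : Ω → ℝ) : Prop :=
  Measurable ξ ∧ ∀ k : ℝ, 0 < k → Integrable (fun ω => Φ (k * ξ ω)) P

/-- The Luxemburg norm `inf {α > 0 : E[Φ(ξ/α)] ≤ 1}`. -/
def luxNorm {Ω : Type*} [MeasurableSpace Ω] (Φ : ℝ → ℝ) (P : Measure Ω) (ξ : Ω → ℝ) : ℝ :=
  sInf {α : ℝ | 0 < α ∧ Integrable (fun ω => Φ (ξ ω / α)) P ∧ ∫ ω, Φ (ξ ω / α) ∂P ≤ 1}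

/-- A probability density: nonnegative, integrable, integrating to 1. -/
def IsDensity {Ω : Type*} [MeasurableSpace Ω] (P : Measure Ω) (h : Ω → ℝ) : Prop :=
  Measurable h ∧ (∀ ω, 0 ≤ h ω) ∧ Integrable h P ∧ ∫ ω, h ω ∂P = 1

/-- The risk measure `ρ(η) = sup_{h ∈ S} E[η h]` on random variables. -/
def rho {Ω : Type*} [MeasurableSpace Ω] (P : Measure Ω) (S : Set (Ω → ℝ)) (η : Ω → ℝ) : ℝ :=
  sSup ((fun h => ∫ ω, η ω * h ω ∂P) '' S)

/-- The (right-continuous-inverse) quantile function `q(x) = inf {u : F(u) > x}`. -/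
def quantile (ν : Measure ℝ) (x : ℝ) : ℝ :=
  sInf {u : ℝ | x < (ν (Set.Iic u)).toReal}

/-- Lebesgue measure on the unit interval (0,1). -/
def P01 : Measure ℝ := volume.restrict (Set.Ioo (0:ℝ) 1)

/-- The increasing rearrangement of a function on (0,1): the quantile of its law. -/
def rearrange (h : ℝ → ℝ) : ℝ → ℝ := quantile (Measure.map h P01)

/-- The law-invariant risk measure on laws: `ρ(ν) = sup_{h ∈ S} ∫₀¹ q_ν h*`. -/
def rhoLaw (S : Set (ℝ → ℝ)) (ν : Measure ℝ) : ℝ :=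
  sSup ((fun h => ∫ u in Set.Ioo (0:ℝ) 1, quantile ν u * rearrange h u) '' S)

/-- Weak (weak-star) convergence of measures on ℝ, tested against bounded
continuous functions. -/
def WeakTendsto (μs : ℕ → Measure ℝ) (ν : Measure ℝ) : Prop :=
  ∀ g : BoundedContinuousFunction ℝ ℝ,
    Filter.Tendsto (fun n => ∫ x, g x ∂(μs n)) Filter.atTop (nhds (∫ x, g x ∂ν))

/-- The empirical measure `(1/N) ∑_{n<N} δ_{x n}`. -/
def empMeasure (x : ℕ → ℝ) (N : ℕ) : Measure ℝ :=
  ((N : ENNReal)⁻¹) • ∑ n ∈ Finset.range N, Measure.dirac (x n)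

/-- Ando's condition: `lim_{λ→∞} sup_{h ∈ A} λ E[Φ(h/λ)] = 0`. -/
def AndoCondition {Ω : Type*} [MeasurableSpace Ω] (Φ : ℝ → ℝ) (P : Measure Ω)
    (A : Set (Ω → ℝ)) : Prop :=
  Filter.Tendsto (fun lam : ℝ => sSup ((fun h => lam * ∫ ω, Φ (h ω / lam) ∂P) '' A))
    Filter.atTop (nhds 0)

/-- The pairing map `h ↦ (g ↦ E[h g])` against a set `G` of test functions. -/
def pairingMap {Ω : Type*} [MeasurableSpace Ω] (P : Measure Ω) (G : Set (Ω → ℝ))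
    (h : Ω → ℝ) : G → ℝ := fun g => ∫ ω, h ω * g.1 ω ∂P

/-- The weak topology `σ(·, G)` on functions, induced by the pairings against `G`. -/
def weakTopology {Ω : Type*} [MeasurableSpace Ω] (P : Measure Ω) (G : Set (Ω → ℝ)) :
    TopologicalSpace (Ω → ℝ) :=
  TopologicalSpace.induced (pairingMap P G) Pi.topologicalSpace

/-! The strong law of large numbers, applied to the indicators of `(-∞, r]` for rational `r`,
makes the empirical cdfs converge at every rational point, so the empirical quantile functions
`q_n` converge to `q` at every point of `(0,1)` outside the countable set of values of the cdf of
`ξ` at rationals. Young's inequality bounds `|q_n f'|` by `(Φ(k₀ f') + Ψ(k q_n))/(k₀ k)`. Since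
`q_n` pushes Lebesgue measure on `(0,1)` forward to the empirical measure, the integral of
`Ψ(k q_n)` is the empirical mean of `Ψ(k ξ_i)`, which converges by the strong law again. Dominated
convergence with converging dominating functions concludes. -/

open ProbabilityTheory

instance : IsProbabilityMeasure P01 := ⟨by simp [P01, Real.volume_Ioo]⟩

section Quantile

variable {ν : Measure ℝ} {x : ℝ}

lemma nonempty_setOf_lt_cdf (hx : x < 1) : {u | x < cdf ν u}.Nonempty :=
  ((tendsto_cdf_atTop ν).eventually (eventually_gt_nhds hx)).exists

lemma bddBelow_setOf_lt_cdf (hx : 0 < x) : BddBelow {u | x < cdf ν u} := by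
  obtain ⟨m, hm⟩ := eventually_atBot.1 ((tendsto_cdf_atBot ν).eventually (eventually_lt_nhds hx))
  exact ⟨m, fun u hu => le_of_not_gt fun hum => (hm u hum.le).not_gt hu⟩

variable [IsProbabilityMeasure ν]

variable (ν x) in
lemma quantile_eq_sInf_cdf : quantile ν x = sInf {u | x < cdf ν u} := by
  simp only [quantile, cdf_eq_real, measureReal_def]

lemma quantile_le_of_lt_cdf (hx : 0 < x) {v : ℝ} (h : x < cdf ν v) : quantile ν x ≤ v := by
  rw [quantile_eq_sInf_cdf]
  exact csInf_le (bddBelow_setOf_lt_cdf hx) h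

lemma lt_cdf_of_quantile_lt (hx : x ∈ Ioo 0 1) {v : ℝ} (h : quantile ν x < v) :
    x < cdf ν v := by
  rw [quantile_eq_sInf_cdf] at h
  obtain ⟨w, hw, hwv⟩ :=
    (csInf_lt_iff (bddBelow_setOf_lt_cdf hx.1) (nonempty_setOf_lt_cdf hx.2)).1 h
  exact hw.trans_le (monotone_cdf ν hwv.le)

lemma le_cdf_of_quantile_le (hx : x ∈ Ioo 0 1) {t : ℝ} (h : quantile ν x ≤ t) :
    x ≤ cdf ν t :=
  ge_of_tendsto (((cdf ν).right_continuous t).mono Ioi_subset_Ici_self)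
    (eventually_nhdsWithin_of_forall fun _ hv => (lt_cdf_of_quantile_lt hx (h.trans_lt hv)).le)

lemma monotoneOn_quantile : MonotoneOn (quantile ν) (Ioo 0 1) := fun a ha b hb hab => by
  simp only [quantile_eq_sInf_cdf]
  exact csInf_le_csInf (bddBelow_setOf_lt_cdf ha.1) (nonempty_setOf_lt_cdf hb.2)
    fun v hv => hab.trans_lt hv

variable (ν) in
lemma aemeasurable_quantile : AEMeasurable (quantile ν) P01 :=
  aemeasurable_restrict_of_monotoneOn measurableSet_Ioo monotoneOn_quantile

lemma map_quantile (ν : Measure ℝ) [IsProbabilityMeasure ν] : P01.map (quantile ν) = ν := by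
  refine Measure.ext_of_Iic _ _ fun t => ?_
  rw [Measure.map_apply_of_aemeasurable (aemeasurable_quantile ν) measurableSet_Iic, P01,
    Measure.restrict_apply' measurableSet_Ioo, ← ofReal_cdf]
  refine le_antisymm ?_ ?_
  · calc volume (quantile ν ⁻¹' Iic t ∩ Ioo 0 1) ≤ volume (Ioc 0 (cdf ν t)) :=
          measure_mono fun u ⟨hu, hu01⟩ => ⟨hu01.1, le_cdf_of_quantile_le hu01 hu⟩
      _ = ENNReal.ofReal (cdf ν t) := by rw [Real.volume_Ioc, sub_zero]
  · calc ENNReal.ofReal (cdf ν t) = volume (Ioo 0 (cdf ν t)) := by rw [Real.volume_Ioo, sub_zero]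
      _ ≤ volume (quantile ν ⁻¹' Iic t ∩ Ioo 0 1) := measure_mono fun u ⟨hu0, hut⟩ =>
          ⟨quantile_le_of_lt_cdf hu0 hut, hu0, hut.trans_le (cdf_le_one ν t)⟩

lemma integrable_comp_quantile {g : ℝ → ℝ} (hg : Integrable g ν) :
    Integrable (fun u => g (quantile ν u)) P01 :=
  (integrable_map_measure (by rw [map_quantile]; exact hg.1) (aemeasurable_quantile ν)).1
    (by rwa [map_quantile])

lemma integral_comp_quantile {g : ℝ → ℝ} (hg : AEStronglyMeasurable g ν) :
    ∫ u, g (quantile ν u) ∂P01 = ∫ t, g t ∂ν := by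
  rw [← integral_map (aemeasurable_quantile ν) (by rwa [map_quantile]), map_quantile]

lemma tendsto_quantile_of_tendsto_cdf {ν : ℕ → Measure ℝ} [∀ n, IsProbabilityMeasure (ν n)]
    {μ : Measure ℝ} [IsProbabilityMeasure μ]
    (hcdf : ∀ r : ℚ, Tendsto (fun n => cdf (ν n) r) atTop (𝓝 (cdf μ r)))
    {u : ℝ} (hu : u ∈ Ioo 0 1) (hu_notMem : u ∉ range fun r : ℚ => cdf μ r) :
    Tendsto (fun n => quantile (ν n) u) atTop (𝓝 (quantile μ u)) := by
  refine tendsto_order.2 ⟨fun b hb => ?_, fun b hb => ?_⟩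
  · obtain ⟨r, hbr, hrq⟩ := exists_rat_btwn hb
    have hr : cdf μ r < u := (not_lt.1 fun h => (quantile_le_of_lt_cdf hu.1 h).not_gt hrq).lt_of_ne
      fun h => hu_notMem ⟨r, h⟩
    filter_upwards [(hcdf r).eventually (eventually_lt_nhds hr)] with n hn
    exact lt_of_not_ge fun h => (lt_cdf_of_quantile_lt hu (h.trans_lt hbr)).not_gt hn
  · obtain ⟨r, hqr, hrb⟩ := exists_rat_btwn hb
    filter_upwards [(hcdf r).eventually (eventually_gt_nhds (lt_cdf_of_quantile_lt hu hqr))]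
      with n hn
    exact (quantile_le_of_lt_cdf hu.1 hn).trans_lt hrb

lemma ae_tendsto_quantile_of_tendsto_cdf {ν : ℕ → Measure ℝ} [∀ n, IsProbabilityMeasure (ν n)]
    {μ : Measure ℝ} [IsProbabilityMeasure μ]
    (hcdf : ∀ r : ℚ, Tendsto (fun n => cdf (ν n) r) atTop (𝓝 (cdf μ r))) :
    ∀ᵐ u ∂P01, Tendsto (fun n => quantile (ν n) u) atTop (𝓝 (quantile μ u)) := by
  have hnull : ∀ᵐ u ∂P01, u ∉ range fun r : ℚ => cdf μ r :=
    ae_restrict_of_ae ((countable_range _).ae_notMem volume)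
  filter_upwards [hnull, ae_restrict_mem measurableSet_Ioo] with u hu_notMem hu
  exact tendsto_quantile_of_tendsto_cdf hcdf hu hu_notMem

end Quantile

section EmpiricalMeasure

variable (x : ℕ → ℝ)

instance (N : ℕ) : IsProbabilityMeasure (empMeasure x (N + 1)) :=
  ⟨by simp [empMeasure, ENNReal.inv_mul_cancel]⟩

lemma integrable_empMeasure (g : ℝ → ℝ) (N : ℕ) : Integrable g (empMeasure x N) := by
  rcases N.eq_zero_or_pos with rfl | hN
  · simp [empMeasure]
  exact (integrable_finsetSum_measure.2 fun i _ => integrable_dirac enorm_lt_top).smul_measure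
    (ENNReal.inv_ne_top.2 (by exact_mod_cast hN.ne'))

lemma integral_empMeasure (g : ℝ → ℝ) (N : ℕ) :
    ∫ t, g t ∂empMeasure x N = (∑ i ∈ Finset.range N, g (x i)) / N := by
  rw [empMeasure, integral_smul_measure,
    integral_finsetSum_measure fun i _ => integrable_dirac enorm_lt_top]
  simp [integral_dirac, div_eq_inv_mul]

end EmpiricalMeasure

lemma integral_indicator_one_Iic_eq_cdf (ν : Measure ℝ) [IsProbabilityMeasure ν] (r : ℝ) :
    ∫ t, (Iic r).indicator 1 t ∂ν = cdf ν r := by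
  rw [integral_indicator_one measurableSet_Iic, cdf_eq_real]

theorem ae_tendsto_integral_empMeasure {Ω : Type*} [MeasurableSpace Ω] {P : Measure Ω}
    {X : ℕ → Ω → ℝ} (hX : ∀ n, Measurable (X n)) (hindep : iIndepFun X P)
    {μ : Measure ℝ} (hlaw : ∀ n, P.map (X n) = μ) {g : ℝ → ℝ} (hg : Measurable g)
    (hgi : Integrable g μ) :
    ∀ᵐ ω ∂P, Tendsto (fun n => ∫ t, g t ∂empMeasure (fun i => X i ω) n) atTop
      (𝓝 (∫ t, g t ∂μ)) := by
  have hident : ∀ i, IdentDistrib (fun ω => g (X i ω)) (fun ω => g (X 0 ω)) P P := fun i =>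
    IdentDistrib.comp ⟨(hX i).aemeasurable, (hX 0).aemeasurable, by rw [hlaw, hlaw]⟩ hg
  have hint : Integrable (fun ω => g (X 0 ω)) P :=
    (integrable_map_measure hg.aestronglyMeasurable (hX 0).aemeasurable).1 (by rwa [hlaw])
  have hmean : ∫ ω, g (X 0 ω) ∂P = ∫ t, g t ∂μ := by
    rw [← hlaw 0, integral_map (hX 0).aemeasurable hg.aestronglyMeasurable]
  filter_upwards [strong_law_ae_real _ hint
    (fun i j hij => (hindep.indepFun hij).comp hg hg) hident] with ω hω
  simpa only [integral_empMeasure, Function.comp_def, hmean] using hω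

section Young

variable {Φ Ψ : ℝ → ℝ}

lemma IsYoung.continuous (hΦ : IsYoung Φ) : Continuous Φ :=
  continuousOn_univ.1 (hΦ.2.1.continuousOn isOpen_univ)

lemma IsYoung.apply_abs (hΦ : IsYoung Φ) (a : ℝ) : Φ |a| = Φ a := by
  rcases abs_cases a with ⟨h, -⟩ | ⟨h, -⟩ <;> simp only [h, hΦ.1]

lemma IsConjugatePair.abs_mul_le (hpair : IsConjugatePair Φ Ψ) {k₁ k₂ : ℝ} (hk₁ : 0 < k₁)
    (hk₂ : 0 < k₂) (a b : ℝ) : |a * b| ≤ (Φ (k₁ * a) + Ψ (k₂ * b)) / (k₁ * k₂) := by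
  have hyoung := hpair.2.2 |k₁ * a| |k₂ * b| (abs_nonneg _) (abs_nonneg _)
  rw [hpair.1.apply_abs, hpair.2.1.apply_abs, abs_mul, abs_mul, abs_of_pos hk₁,
    abs_of_pos hk₂] at hyoung
  rw [le_div_iff₀ (mul_pos hk₁ hk₂), abs_mul]
  linarith

end Young

section GeneralizedDominatedConvergence

variable {α : Type*} [MeasurableSpace α] {μ : Measure α}

lemma integral_le_of_tendsto_integral {φ : ℕ → α → ℝ} {φlim : α → ℝ}
    (hφi : ∀ n, Integrable (φ n) μ) (hφ0 : ∀ n, 0 ≤ᵐ[μ] φ n) (hlimi : Integrable φlim μ)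
    (hlim : ∀ᵐ a ∂μ, Tendsto (fun n => φ n a) atTop (𝓝 (φlim a)))
    {c : ℝ} (hc : Tendsto (fun n => ∫ a, φ n a ∂μ) atTop (𝓝 c)) :
    ∫ a, φlim a ∂μ ≤ c := by
  have hlim0 : 0 ≤ᵐ[μ] φlim := by
    filter_upwards [hlim, ae_all_iff.2 hφ0] with a ha h0
    exact ge_of_tendsto' ha h0
  have hc0 : 0 ≤ c := ge_of_tendsto' hc fun n => integral_nonneg_of_ae (hφ0 n)
  have hofReal := ENNReal.continuous_ofReal.tendsto
  rw [← ENNReal.ofReal_le_ofReal_iff hc0, ofReal_integral_eq_lintegral_ofReal hlimi hlim0,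
    ← ((hofReal c).comp hc).liminf_eq]
  calc ∫⁻ a, ENNReal.ofReal (φlim a) ∂μ
      = ∫⁻ a, liminf (fun n => ENNReal.ofReal (φ n a)) atTop ∂μ :=
        lintegral_congr_ae (hlim.mono fun a ha => (((hofReal _).comp ha).liminf_eq).symm)
    _ ≤ liminf (fun n => ∫⁻ a, ENNReal.ofReal (φ n a) ∂μ) atTop :=
        lintegral_liminf_le' fun n => (hφi n).1.aemeasurable.ennreal_ofReal
    _ = liminf (fun n => ENNReal.ofReal (∫ a, φ n a ∂μ)) atTop := by
        simp only [ofReal_integral_eq_lintegral_ofReal (hφi _) (hφ0 _)]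

variable {g G : ℕ → α → ℝ} {gl Gl : α → ℝ}

lemma integral_eq_of_tendsto_integral_of_dominated (hgi : ∀ n, Integrable (g n) μ)
    (hdom : ∀ n, ∀ᵐ a ∂μ, |g n a| ≤ G n a) (hGi : ∀ n, Integrable (G n) μ)
    (hGli : Integrable Gl μ) (hgli : Integrable gl μ)
    (hgt : ∀ᵐ a ∂μ, Tendsto (fun n => g n a) atTop (𝓝 (gl a)))
    (hGt : ∀ᵐ a ∂μ, Tendsto (fun n => G n a) atTop (𝓝 (Gl a)))
    (hGit : Tendsto (fun n => ∫ a, G n a ∂μ) atTop (𝓝 (∫ a, Gl a ∂μ)))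
    {c : ℝ} (hc : Tendsto (fun n => ∫ a, g n a ∂μ) atTop (𝓝 c)) :
    ∫ a, gl a ∂μ = c := by
  have hadd : ∫ a, Gl a + gl a ∂μ ≤ ∫ a, Gl a ∂μ + c :=
    integral_le_of_tendsto_integral (φ := fun n a => G n a + g n a)
      (fun n => (hGi n).add (hgi n))
      (fun n => (hdom n).mono fun a ha => by
        simp only [Pi.zero_apply]; linarith [neg_abs_le (g n a)])
      (hGli.add hgli) (by filter_upwards [hgt, hGt] with a h h' using h'.add h)
      ((hGit.add hc).congr fun n => (integral_add (hGi n) (hgi n)).symm)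
  have hsub : ∫ a, Gl a - gl a ∂μ ≤ ∫ a, Gl a ∂μ - c :=
    integral_le_of_tendsto_integral (φ := fun n a => G n a - g n a)
      (fun n => (hGi n).sub (hgi n))
      (fun n => (hdom n).mono fun a ha => by
        simp only [Pi.zero_apply]; linarith [le_abs_self (g n a)])
      (hGli.sub hgli) (by filter_upwards [hgt, hGt] with a h h' using h'.sub h)
      ((hGit.sub hc).congr fun n => (integral_sub (hGi n) (hgi n)).symm)
  rw [integral_add hGli hgli] at hadd
  rw [integral_sub hGli hgli] at hsub
  linarith

theorem tendsto_integral_of_dominated_convergence_of_tendsto_integral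
    (hgm : ∀ n, AEStronglyMeasurable (g n) μ) (hdom : ∀ n, ∀ᵐ a ∂μ, |g n a| ≤ G n a)
    (hGi : ∀ n, Integrable (G n) μ) (hGli : Integrable Gl μ)
    (hgt : ∀ᵐ a ∂μ, Tendsto (fun n => g n a) atTop (𝓝 (gl a)))
    (hGt : ∀ᵐ a ∂μ, Tendsto (fun n => G n a) atTop (𝓝 (Gl a)))
    (hGit : Tendsto (fun n => ∫ a, G n a ∂μ) atTop (𝓝 (∫ a, Gl a ∂μ))) :
    Tendsto (fun n => ∫ a, g n a ∂μ) atTop (𝓝 (∫ a, gl a ∂μ)) := by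
  have hgi : ∀ n, Integrable (g n) μ := fun n => (hGi n).mono' (hgm n) (hdom n)
  have hgli : Integrable gl μ := by
    refine hGli.mono' (aestronglyMeasurable_of_tendsto_ae atTop hgm hgt) ?_
    filter_upwards [hgt, hGt, ae_all_iff.2 hdom] with a h h' hle
    exact le_of_tendsto_of_tendsto' h.norm h' hle
  obtain ⟨B, hB⟩ := hGit.bddAbove_range
  have hbdd : ∀ n, ∫ a, g n a ∂μ ∈ Icc (-B) B := fun n => abs_le.1 <| calc
    |∫ a, g n a ∂μ| ≤ ∫ a, |g n a| ∂μ := abs_integral_le_integral_abs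
    _ ≤ ∫ a, G n a ∂μ := integral_mono_ae (hgi n).abs (hGi n) (hdom n)
    _ ≤ B := hB ⟨n, rfl⟩
  refine tendsto_of_subseq_tendsto fun ns hns => ?_
  obtain ⟨c, -, ms, hms, hc⟩ :=
    tendsto_subseq_of_bounded (Metric.isBounded_Icc (-B) B) fun k => hbdd (ns k)
  have hnms : Tendsto (ns ∘ ms) atTop atTop := hns.comp hms.tendsto_atTop
  refine ⟨ms, ?_⟩
  rwa [integral_eq_of_tendsto_integral_of_dominated (fun k => hgi _) (fun k => hdom _)
    (fun k => hGi _) hGli hgli (hgt.mono fun a h => h.comp hnms)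
    (hGt.mono fun a h => h.comp hnms) (hGit.comp hnms) hc]

end GeneralizedDominatedConvergence

theorem tendsto_integral_quantile_mul {Φ Ψ : ℝ → ℝ} (hpair : IsConjugatePair Φ Ψ)
    {ν : ℕ → Measure ℝ} [∀ n, IsProbabilityMeasure (ν n)] {μ : Measure ℝ} [IsProbabilityMeasure μ]
    (hcdf : ∀ r : ℚ, Tendsto (fun n => cdf (ν n) r) atTop (𝓝 (cdf μ r)))
    {k : ℝ} (hk : 0 < k) (hΨν : ∀ n, Integrable (fun t => Ψ (k * t)) (ν n))
    (hΨμ : Integrable (fun t => Ψ (k * t)) μ)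
    (hΨ : Tendsto (fun n => ∫ t, Ψ (k * t) ∂ν n) atTop (𝓝 (∫ t, Ψ (k * t) ∂μ)))
    {g : ℝ → ℝ} (hg : MemLOrlicz Φ P01 g) :
    Tendsto (fun n => ∫ u, quantile (ν n) u * g u ∂P01) atTop
      (𝓝 (∫ u, quantile μ u * g u ∂P01)) := by
  obtain ⟨hgm, k₀, hk₀, hΦ⟩ := hg
  let bound (ρ : Measure ℝ) (u : ℝ) : ℝ := (Φ (k₀ * g u) + Ψ (k * quantile ρ u)) / (k₀ * k)
  have hbound_int (ρ : Measure ℝ) [IsProbabilityMeasure ρ]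
      (hρ : Integrable (fun t => Ψ (k * t)) ρ) : Integrable (bound ρ) P01 :=
    (hΦ.add (integrable_comp_quantile hρ)).div_const _
  have hbound_integral (ρ : Measure ℝ) [IsProbabilityMeasure ρ]
      (hρ : Integrable (fun t => Ψ (k * t)) ρ) :
      ∫ u, bound ρ u ∂P01 = (∫ u, Φ (k₀ * g u) ∂P01 + ∫ t, Ψ (k * t) ∂ρ) / (k₀ * k) := by
    rw [integral_div, integral_add hΦ (integrable_comp_quantile hρ), integral_comp_quantile hρ.1]
  have hq := ae_tendsto_quantile_of_tendsto_cdf hcdf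
  refine tendsto_integral_of_dominated_convergence_of_tendsto_integral
    (G := fun n => bound (ν n)) (Gl := bound μ)
    (fun n => (aemeasurable_quantile _).aestronglyMeasurable.mul hgm.aestronglyMeasurable)
    (fun n => .of_forall fun u => by rw [mul_comm]; exact hpair.abs_mul_le hk₀ hk _ _)
    (fun n => hbound_int _ (hΨν n)) (hbound_int μ hΨμ) ?_ ?_ ?_
  · filter_upwards [hq] with u hu using hu.mul_const _
  · filter_upwards [hq] with u hu
    exact (((hpair.2.1.continuous.tendsto _).comp (hu.const_mul k)).const_add _).div_const _
  · simp only [hbound_integral _ (hΨν _), hbound_integral μ hΨμ]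
    exact (hΨ.const_add _).div_const _

theorem distorted_empirical_mean_tendsto_general
    {Ω : Type*} [MeasurableSpace Ω] (P : Measure Ω) [IsProbabilityMeasure P]
    (Φ Ψ : ℝ → ℝ) (hpair : IsConjugatePair Φ Ψ)
    (f' : ℝ → ℝ)
    (hf'Φ : MemLOrlicz Φ P01 f')
    (ξ : Ω → ℝ) (hξ : MemLOrlicz Ψ P ξ)
    (ξs : ℕ → Ω → ℝ) (hmeas : ∀ n, Measurable (ξs n))
    (hindep : ProbabilityTheory.iIndepFun (m := fun _ => Real.measurableSpace) ξs P)
    (hid : ∀ n, Measure.map (ξs n) P = Measure.map ξ P) :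
    ∀ᵐ ω ∂P,
      Filter.Tendsto
        (fun n => ∫ u in Set.Ioo (0:ℝ) 1,
          quantile (empMeasure (fun i => ξs i ω) n) u * f' u)
        Filter.atTop
        (nhds (∫ u in Set.Ioo (0:ℝ) 1, quantile (Measure.map ξ P) u * f' u)) := by
  obtain ⟨hξm, k, hk, hΨξ⟩ := hξ
  have : IsProbabilityMeasure (P.map ξ) := Measure.isProbabilityMeasure_map hξm.aemeasurable
  have hΨm : Measurable fun t => Ψ (k * t) :=
    hpair.2.1.continuous.measurable.comp (measurable_const_mul k)
  have hΨμ : Integrable (fun t => Ψ (k * t)) (P.map ξ) :=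
    (integrable_map_measure hΨm.aestronglyMeasurable hξm.aemeasurable).2 hΨξ
  have hind (r : ℚ) := ae_tendsto_integral_empMeasure hmeas hindep hid
    (measurable_one.indicator (measurableSet_Iic (a := (r : ℝ))))
    ((integrable_const 1).indicator measurableSet_Iic)
  filter_upwards [ae_tendsto_integral_empMeasure hmeas hindep hid hΨm hΨμ, ae_all_iff.2 hind]
    with ω hΨ hcdf
  rw [← tendsto_add_atTop_iff_nat 1]
  refine tendsto_integral_quantile_mul hpair (fun r => ?_) hk
    (fun n => integrable_empMeasure _ _ _) hΨμ (hΨ.comp (tendsto_add_atTop_nat 1)) hf'Φ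
  simpa only [Function.comp_def, integral_indicator_one_Iic_eq_cdf] using
    (hcdf r).comp (tendsto_add_atTop_nat 1)

/-- almost sure convergence of distorted empirical means: the Choquet
integral of the empirical quantile function (which equals the order-statistics sum
`ξ_{[n:1]} f(1/n) + ∑ ξ_{[n:k+1]}(f((k+1)/n) − f(k/n))`) converges a.s. to `∫₀¹ q f'`. -/
theorem distorted_empirical_mean_tendsto
    {Ω : Type*} [MeasurableSpace Ω] (P : Measure Ω) [IsProbabilityMeasure P]
    (Φ Ψ : ℝ → ℝ) (hpair : IsConjugatePair Φ Ψ)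
    (f : ℝ → ℝ) (hconv : ConvexOn ℝ (Set.Icc 0 1) f)
    (h0 : f 0 = 0) (h1 : f 1 = 1)
    (hcont : ContinuousWithinAt f (Set.Icc 0 1) 1)
    (f' : ℝ → ℝ) (hf' : ∀ᵐ u ∂P01, HasDerivAt f (f' u) u)
    (hf'Φ : MemLOrlicz Φ P01 f')
    (ξ : Ω → ℝ) (hξ : MemLOrlicz Ψ P ξ)
    (ξs : ℕ → Ω → ℝ) (hmeas : ∀ n, Measurable (ξs n))
    (hindep : ProbabilityTheory.iIndepFun (m := fun _ => Real.measurableSpace) ξs P)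
    (hid : ∀ n, Measure.map (ξs n) P = Measure.map ξ P) :
    ∀ᵐ ω ∂P,
      Filter.Tendsto
        (fun n => ∫ u in Set.Ioo (0:ℝ) 1,
          quantile (empMeasure (fun i => ξs i ω) n) u * f' u)
        Filter.atTop
        (nhds (∫ u in Set.Ioo (0:ℝ) 1, quantile (Measure.map ξ P) u * f' u)) :=
  distorted_empirical_mean_tendsto_general P Φ Ψ hpair f' hf'Φ ξ hξ ξs hmeas hindep hid
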